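/- Let (Ω, ℱ, μ) be a standard Borel probability space, let 𝔪 ⊆ ℱ be a sub-σ-algebra, let A : Ω → ℝ be measurable with A(ω) ∈ {0,1} for all ω, and let Y₁, Y₀ : Ω → ℝ be integrable potential outcomes with observed outcome Y = A·Y₁ + (1−A)·Y₀ (consistency). Let e = E[A ∣ 𝔪] be the propensity score and suppose there exists ε > 0 with ε ≤ e(ω) ≤ 1 − ε almost everywhere (positivity). If A and Y₁ are conditionally independent given 𝔪 and A and Y₀ are conditionally independent given 𝔪 (exchangeability), then the Horvitz–Thompson IPTW contrast identifies the average treatment effect: ω ↦ A(ω) Y(ω)/e(ω) − (1−A(ω)) Y(ω)/(1−e(ω)) is integrable and ∫ ( A·Y/e − (1−A)·Y/(1−e) ) dμ = ∫ Y₁ dμ − ∫ Y₀ dμ, i.e., this equals the average treatment effect ATE = E[Y(1) − Y(0)]. -/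

import Mathlib

open MeasureTheory Filter Topology

/-- Truncation of a real number to the interval `[-n, n]`. -/
noncomputable def iptwTrunc (n : ℕ) (u : ℝ) : ℝ := max (-(n : ℝ)) (min (n : ℝ) u)

lemma iptwTrunc_continuous (n : ℕ) : Continuous (iptwTrunc n) := by
  unfold iptwTrunc; fun_prop

lemma iptwTrunc_abs_le (n : ℕ) (u : ℝ) : |iptwTrunc n u| ≤ |u| := by
  unfold iptwTrunc
  rw [abs_le]
  constructor
  · exact le_max_of_le_right (le_min
      (le_trans (neg_nonpos.2 (abs_nonneg u)) (Nat.cast_nonneg n)) (neg_abs_le u))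
  · exact max_le (le_trans (neg_nonpos.2 (Nat.cast_nonneg n)) (abs_nonneg u))
      (le_trans (min_le_right _ _) (le_abs_self u))

lemma iptwTrunc_abs_le_n (n : ℕ) (u : ℝ) : |iptwTrunc n u| ≤ (n : ℝ) := by
  unfold iptwTrunc
  rw [abs_le]
  exact ⟨le_max_left _ _,
    max_le (neg_le_self (Nat.cast_nonneg n)) (min_le_left _ _)⟩

lemma iptwTrunc_tendsto (u : ℝ) :
    Tendsto (fun n => iptwTrunc n u) atTop (𝓝 u) := by
  apply tendsto_const_nhds.congr'
  filter_upwards [eventually_ge_atTop ⌈|u|⌉₊] with n hn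
  have h : |u| ≤ (n : ℝ) := le_trans (Nat.le_ceil _) (Nat.cast_le.2 hn)
  rw [abs_le] at h
  unfold iptwTrunc
  rw [min_eq_right h.2, max_eq_right h.1]

/-- One arm of the IPTW identification: if `|B| ≤ 1`, `W` is integrable, `p` is
`m`-strongly measurable with `ε ≤ p` a.e., and the conditional-independence
factorization holds for bounded transforms of `W`, then `B·W/p` is integrable
with `∫ B·W/p = ∫ W`. -/
lemma iptw_arm {Ω : Type*} [inst : MeasurableSpace Ω]
    (μ : Measure Ω) [IsProbabilityMeasure μ]
    (m : MeasurableSpace Ω) (hm : m ≤ inst)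
    (B : Ω → ℝ) (hB : Measurable[inst] B) (hB1 : ∀ ω, |B ω| ≤ 1)
    (W : Ω → ℝ) (hW : Integrable W μ)
    (p : Ω → ℝ) (hp : StronglyMeasurable[m] p)
    (ε : ℝ) (hε : 0 < ε) (hpos : ∀ᵐ ω ∂μ, ε ≤ p ω)
    (hCI : ∀ g : ℝ → ℝ, Measurable g → (∃ C, ∀ u, |g u| ≤ C) →
      μ[(fun ω => B ω * g (W ω)) | m] =ᵐ[μ]
        fun ω => p ω * (μ[(fun ω' => g (W ω')) | m]) ω) :
    Integrable (fun ω => B ω * W ω / p ω) μ ∧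
      ∫ ω, B ω * W ω / p ω ∂μ = ∫ ω, W ω ∂μ := by
  have hWm : AEStronglyMeasurable[inst] W μ := hW.1
  have hpm : AEStronglyMeasurable[inst] p μ := (hp.mono hm).aestronglyMeasurable
  -- a.e. pointwise bound machinery
  have habs : ∀ ω, ε ≤ p ω → ∀ v : ℝ, |v| ≤ |W ω| → |B ω * v / p ω| ≤ ε⁻¹ * |W ω| := by
    intro ω hεp v hv
    rw [abs_div, abs_mul]
    have h1 : |B ω| * |v| ≤ |W ω| := by
      have := hB1 ω
      have := abs_nonneg v
      nlinarith [abs_nonneg (W ω)]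
    have h2 : ε ≤ |p ω| := le_trans hεp (le_abs_self _)
    calc |B ω| * |v| / |p ω| ≤ |W ω| / ε := by
          apply div_le_div₀ (abs_nonneg _) h1 hε h2
      _ = ε⁻¹ * |W ω| := by rw [div_eq_inv_mul]
  have hbound_int : Integrable (fun ω => ε⁻¹ * |W ω|) μ := hW.abs.const_mul _
  have hpinv : AEStronglyMeasurable[inst] (fun ω => (p ω)⁻¹) μ :=
    (hpm.aemeasurable.inv).aestronglyMeasurable
  have htarget_meas : AEStronglyMeasurable[inst] (fun ω => B ω * W ω / p ω) μ := by
    simp only [div_eq_mul_inv]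
    exact ((hB.aestronglyMeasurable (μ := μ)).mul hWm).mul hpinv
  have htarget_bound : ∀ᵐ ω ∂μ, ‖B ω * W ω / p ω‖ ≤ ε⁻¹ * |W ω| := by
    filter_upwards [hpos] with ω hεp
    exact habs ω hεp (W ω) le_rfl
  have hint : Integrable (fun ω => B ω * W ω / p ω) μ :=
    Integrable.mono' hbound_int htarget_meas htarget_bound
  refine ⟨hint, ?_⟩
  -- per-n identity
  have key : ∀ n : ℕ, ∫ ω, B ω * iptwTrunc n (W ω) / p ω ∂μ =
      ∫ ω, iptwTrunc n (W ω) ∂μ := by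
    intro n
    set gW : Ω → ℝ := fun ω => iptwTrunc n (W ω) with hgW_def
    have hgW_meas : AEStronglyMeasurable[inst] gW μ :=
      (iptwTrunc_continuous n).comp_aestronglyMeasurable hWm
    have hgW_int : Integrable gW μ := by
      refine Integrable.mono' (integrable_const (n : ℝ)) hgW_meas ?_
      filter_upwards with ω
      exact iptwTrunc_abs_le_n n (W ω)
    have hX_int : Integrable (fun ω => B ω * gW ω) μ := by
      refine Integrable.mono' (integrable_const (n : ℝ)) ((hB.aestronglyMeasurable (μ := μ)).mul hgW_meas) ?_
      filter_upwards with ω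
      have h1 := hB1 ω
      have h2 := iptwTrunc_abs_le_n n (W ω)
      have h3 := abs_nonneg (iptwTrunc n (W ω))
      calc ‖B ω * gW ω‖ = |B ω| * |gW ω| := abs_mul _ _
        _ ≤ 1 * (n : ℝ) := by
            apply mul_le_mul h1 h2 (abs_nonneg _) zero_le_one
        _ = (n : ℝ) := one_mul _
    set q : Ω → ℝ := fun ω => (p ω)⁻¹ with hq_def
    have hq : StronglyMeasurable[m] q := by
      have := hp.measurable.inv
      exact this.stronglyMeasurable
    have hqX_int : Integrable (fun ω => q ω * (B ω * gW ω)) μ := by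
      refine Integrable.mono' (integrable_const (ε⁻¹ * (n : ℝ)))
        (((hq.mono hm).aestronglyMeasurable (μ := μ)).mul ((hB.aestronglyMeasurable (μ := μ)).mul hgW_meas)) ?_
      filter_upwards [hpos] with ω hεp
      have h2 : ε ≤ |p ω| := le_trans hεp (le_abs_self _)
      have hq1 : |q ω| ≤ ε⁻¹ := by
        rw [hq_def, abs_inv]
        exact inv_anti₀ hε h2
      have h1 := hB1 ω
      have h3 := iptwTrunc_abs_le_n n (W ω)
      calc ‖q ω * (B ω * gW ω)‖ = |q ω| * (|B ω| * |gW ω|) := by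
            simp [Real.norm_eq_abs, abs_mul]
        _ ≤ ε⁻¹ * (1 * (n : ℝ)) := by
            apply mul_le_mul hq1 (mul_le_mul h1 h3 (abs_nonneg _) zero_le_one)
              (by positivity) (by positivity)
        _ = ε⁻¹ * (n : ℝ) := by ring
    -- rewrite integrand
    have hrw : (fun ω => B ω * gW ω / p ω) = fun ω => q ω * (B ω * gW ω) := by
      funext ω
      rw [hq_def, div_eq_mul_inv]
      ring
    have step1 : ∫ ω, q ω * (B ω * gW ω) ∂μ =
        ∫ ω, (μ[(fun ω => q ω * (B ω * gW ω)) | m]) ω ∂μ :=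
      (integral_condExp hm).symm
    have step2 : μ[(fun ω => q ω * (B ω * gW ω)) | m] =ᵐ[μ]
        fun ω => q ω * (μ[(fun ω => B ω * gW ω) | m]) ω := by
      have := condExp_mul_of_stronglyMeasurable_left (μ := μ) hq hqX_int hX_int
      exact this
    have step3 : μ[(fun ω => B ω * gW ω) | m] =ᵐ[μ]
        fun ω => p ω * (μ[(fun ω' => iptwTrunc n (W ω')) | m]) ω :=
      hCI (iptwTrunc n) (iptwTrunc_continuous n).measurable
        ⟨(n : ℝ), fun u => iptwTrunc_abs_le_n n u⟩
    have step4 : (fun ω => q ω * (μ[(fun ω => B ω * gW ω) | m]) ω) =ᵐ[μ]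
        μ[(fun ω' => iptwTrunc n (W ω')) | m] := by
      filter_upwards [step3, hpos] with ω h3 hεp
      have hpne : p ω ≠ 0 := ne_of_gt (lt_of_lt_of_le hε hεp)
      rw [h3, hq_def]
      field_simp
    calc ∫ ω, B ω * iptwTrunc n (W ω) / p ω ∂μ
        = ∫ ω, q ω * (B ω * gW ω) ∂μ := by rw [← hrw]
      _ = ∫ ω, (μ[(fun ω => q ω * (B ω * gW ω)) | m]) ω ∂μ := step1
      _ = ∫ ω, (μ[(fun ω' => iptwTrunc n (W ω')) | m]) ω ∂μ :=
          integral_congr_ae (step2.trans step4)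
      _ = ∫ ω, iptwTrunc n (W ω) ∂μ := integral_condExp hm
  -- limit on the left
  have hlim1 : Tendsto (fun n => ∫ ω, B ω * iptwTrunc n (W ω) / p ω ∂μ) atTop
      (𝓝 (∫ ω, B ω * W ω / p ω ∂μ)) := by
    apply tendsto_integral_of_dominated_convergence (fun ω => ε⁻¹ * |W ω|)
    · intro n
      simp only [div_eq_mul_inv]
      exact ((hB.aestronglyMeasurable (μ := μ)).mul
        ((iptwTrunc_continuous n).comp_aestronglyMeasurable hWm)).mul hpinv
    · exact hbound_int
    · intro n
      filter_upwards [hpos] with ω hεp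
      exact habs ω hεp _ (iptwTrunc_abs_le n (W ω))
    · filter_upwards with ω
      exact ((iptwTrunc_tendsto (W ω)).const_mul (B ω)).div_const (p ω)
  -- limit on the right
  have hlim2 : Tendsto (fun n => ∫ ω, iptwTrunc n (W ω) ∂μ) atTop
      (𝓝 (∫ ω, W ω ∂μ)) := by
    apply tendsto_integral_of_dominated_convergence (fun ω => |W ω|)
    · intro n
      exact (iptwTrunc_continuous n).comp_aestronglyMeasurable hWm
    · exact hW.abs
    · intro n
      filter_upwards with ω
      exact iptwTrunc_abs_le n (W ω)
    · filter_upwards with ω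
      exact iptwTrunc_tendsto (W ω)
  have : Tendsto (fun n => ∫ ω, iptwTrunc n (W ω) ∂μ) atTop
      (𝓝 (∫ ω, B ω * W ω / p ω ∂μ)) := by
    apply hlim1.congr
    intro n
    exact key n
  exact tendsto_nhds_unique this hlim2

/-- the Horvitz–Thompson IPTW contrast identifies the average
treatment effect. On a standard Borel probability space, with binary treatment
`A`, integrable potential outcomes `Y₁, Y₀`, observed outcome
`Y = A·Y₁ + (1−A)·Y₀` (consistency), propensity score `e = E[A ∣ m]` with
`ε ≤ e ≤ 1 − ε` a.e. for some `ε > 0` (positivity), and `A` conditionally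
independent of each of `Y₁` and `Y₀` given `m` (exchangeability), the function
`ω ↦ A·Y/e − (1−A)·Y/(1−e)` is integrable and
`∫ (A·Y/e − (1−A)·Y/(1−e)) dμ = ∫ Y₁ dμ − ∫ Y₀ dμ = ATE`. -/
theorem iptw_identifies_ate
    {Ω : Type*} (m : MeasurableSpace Ω) [inst : MeasurableSpace Ω] [StandardBorelSpace Ω]
    (μ : Measure Ω) [IsProbabilityMeasure μ]
    (hm : m ≤ inst)
    (A Y₁ Y₀ Y : Ω → ℝ)
    (hA : Measurable A) (hA01 : ∀ ω, A ω = 0 ∨ A ω = 1)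
    (hY₁ : Integrable Y₁ μ) (hY₀ : Integrable Y₀ μ)
    (hY : ∀ ω, Y ω = A ω * Y₁ ω + (1 - A ω) * Y₀ ω)
    (e : Ω → ℝ) (he : e = μ[A | m])
    (ε : ℝ) (hε : 0 < ε) (hpos : ∀ᵐ ω ∂μ, ε ≤ e ω ∧ e ω ≤ 1 - ε)
    (hCI1 : ∀ f g : ℝ → ℝ, Measurable f → Measurable g →
      (∃ C, ∀ u, |f u| ≤ C) → (∃ C, ∀ u, |g u| ≤ C) →
      μ[(fun ω => f (A ω) * g (Y₁ ω)) | m] =ᵐ[μ]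
        fun ω => (μ[(fun ω' => f (A ω')) | m]) ω * (μ[(fun ω' => g (Y₁ ω')) | m]) ω)
    (hCI0 : ∀ f g : ℝ → ℝ, Measurable f → Measurable g →
      (∃ C, ∀ u, |f u| ≤ C) → (∃ C, ∀ u, |g u| ≤ C) →
      μ[(fun ω => f (A ω) * g (Y₀ ω)) | m] =ᵐ[μ]
        fun ω => (μ[(fun ω' => f (A ω')) | m]) ω * (μ[(fun ω' => g (Y₀ ω')) | m]) ω) :
    Integrable (fun ω => A ω * Y ω / e ω - (1 - A ω) * Y ω / (1 - e ω)) μ ∧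
      ∫ ω, (A ω * Y ω / e ω - (1 - A ω) * Y ω / (1 - e ω)) ∂μ =
        (∫ ω, Y₁ ω ∂μ) - ∫ ω, Y₀ ω ∂μ := by
  have hA1 : ∀ ω, |A ω| ≤ 1 := by
    intro ω; rcases hA01 ω with h | h <;> rw [h] <;> norm_num
  have hA_int : Integrable A μ := by
    refine Integrable.mono' (integrable_const 1) (hA.aestronglyMeasurable (μ := μ)) ?_
    filter_upwards with ω; exact hA1 ω
  have he_sm : StronglyMeasurable[m] e := he ▸ stronglyMeasurable_condExp
  -- the clamp function
  set cl : ℝ → ℝ := fun u => max 0 (min 1 u) with hcl_def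
  have hcl_meas : Measurable cl := by unfold cl; fun_prop
  have hcl_bdd : ∀ u, |cl u| ≤ 1 := by
    intro u
    rw [hcl_def, abs_le]
    constructor
    · simp only [neg_le, le_max_iff]; left; norm_num
    · exact max_le zero_le_one (min_le_left _ _)
  have hclA : ∀ ω, cl (A ω) = A ω := by
    intro ω; rcases hA01 ω with h | h <;> rw [h, hcl_def] <;> norm_num
  -- arm 1
  have arm1 := iptw_arm (inst := inst) μ m hm A hA hA1 Y₁ hY₁ e he_sm ε hε
    (by filter_upwards [hpos] with ω h; exact h.1)
    (by
      intro g hg hgb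
      have h := hCI1 cl g hcl_meas hg ⟨1, hcl_bdd⟩ hgb
      have e1 : (fun ω => cl (A ω) * g (Y₁ ω)) = fun ω => A ω * g (Y₁ ω) := by
        funext ω; rw [hclA ω]
      have e2 : (fun ω' => cl (A ω')) = A := by funext ω; exact hclA ω
      rw [e1, e2, ← he] at h
      exact h)
  -- arm 0
  have hB0 : Measurable[inst] (fun ω => 1 - A ω) :=
    measurable_const.sub hA
  have hB01 : ∀ ω, |1 - A ω| ≤ 1 := by
    intro ω; rcases hA01 ω with h | h <;> rw [h] <;> norm_num
  have h1e_sm : StronglyMeasurable[m] (fun ω => 1 - e ω) :=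
    stronglyMeasurable_const.sub he_sm
  have hcondexp_sub : μ[(fun ω' => 1 - A ω') | m] =ᵐ[μ] fun ω => 1 - e ω := by
    have h1 : μ[(fun _ : Ω => (1 : ℝ)) - A | m] =ᵐ[μ]
        μ[(fun _ : Ω => (1 : ℝ)) | m] - μ[A | m] :=
      condExp_sub (integrable_const 1) hA_int m
    have h2 : μ[(fun _ : Ω => (1 : ℝ)) | m] = fun _ => (1 : ℝ) := condExp_const hm 1
    have h3 : (fun ω' : Ω => 1 - A ω') = (fun _ : Ω => (1 : ℝ)) - A := by
      funext ω; simp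
    rw [h3]
    refine h1.trans ?_
    rw [h2, he]
    filter_upwards with ω
    simp
  have arm0 := iptw_arm (inst := inst) μ m hm (fun ω => 1 - A ω) hB0 hB01 Y₀ hY₀
    (fun ω => 1 - e ω) h1e_sm ε hε
    (by filter_upwards [hpos] with ω h; linarith [h.2])
    (by
      intro g hg hgb
      have hf_meas : Measurable (fun u => 1 - cl u) := measurable_const.sub hcl_meas
      have hf_bdd : ∀ u, |1 - cl u| ≤ 1 := by
        intro u
        have h1 := hcl_bdd u
        have h2 : 0 ≤ cl u := le_max_left _ _
        rw [abs_le] at h1 ⊢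
        constructor <;> linarith [h1.2]
      have h := hCI0 (fun u => 1 - cl u) g hf_meas hg ⟨1, hf_bdd⟩ hgb
      have e1 : (fun ω => (1 - cl (A ω)) * g (Y₀ ω)) =
          fun ω => (1 - A ω) * g (Y₀ ω) := by
        funext ω; rw [hclA ω]
      have e2 : (fun ω' => 1 - cl (A ω')) = fun ω' => 1 - A ω' := by
        funext ω; rw [hclA ω]
      rw [e1, e2] at h
      refine h.trans ?_
      filter_upwards [hcondexp_sub] with ω hω
      rw [hω])
  -- rewrite the target using consistency and binarity
  have hrw : (fun ω => A ω * Y ω / e ω - (1 - A ω) * Y ω / (1 - e ω)) =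
      fun ω => A ω * Y₁ ω / e ω - (1 - A ω) * Y₀ ω / (1 - e ω) := by
    funext ω
    rcases hA01 ω with h | h <;> rw [hY ω, h] <;> ring
  constructor
  · rw [hrw]
    exact arm1.1.sub arm0.1
  · rw [hrw, integral_sub arm1.1 arm0.1, arm1.2, arm0.2]
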